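/- arXiv:math/0307245 — 2 statements merged into one kernel-verified Lean document; each statement's English description precedes it below -/
import Mathlib

section
/- Let 0 ≤ t₀ < t₁, c > 0, and let A : [t₀,t₁] → ℝ be continuous with A(t) ≥ 0 for all t, such that for every t ∈ [t₀,t₁) the upper Dini derivative D⁺A(t) = limsup_{h→0⁺} (A(t+h) − A(t))/h satisfies D⁺A(t) ≤ −2π + (3/(4(t+c)))·A(t). Then A(t₁)/(t₁+c) ≤ A(t₀)/(t₀+c) − 2π·(log(t₁+c) − log(t₀+c)). -/
/-!
Since `A ≥ 0`, the hypothesis gives `D⁺A ≤ A/(t+c) − 2π`, whose equality case is the linear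
ODE `y' = y/(t+c) − 2π`, solved by `y(t) = (t+c)(A(t₀)/(t₀+c) − 2π (log(t+c) − log(t₀+c)))`.
Fencing `A` by the barriers `y + ε(t − t₀)`, which at a contact point grow strictly faster than
the Dini bound allows, gives `A ≤ y` on `[t₀, t₁]`; dividing by `t₁ + c` is the claim.
-/

open Filter

/-- The upper Dini derivative `D⁺A(t) = limsup_{h→0⁺} (A(t+h) − A(t))/h`, valued in `EReal`. -/
noncomputable def upperDiniDeriv (A : ℝ → ℝ) (t : ℝ) : EReal :=
  Filter.limsup (fun h : ℝ => (((A (t + h) - A t) / h : ℝ) : EReal)) (nhdsWithin 0 (Set.Ioi 0))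

open Set Topology

theorem eventually_slope_lt_of_upperDiniDeriv_lt {A : ℝ → ℝ} {x r : ℝ}
    (h : upperDiniDeriv A x < r) : ∀ᶠ z in 𝓝[>] x, slope A x z < r := by
  have hshift : Tendsto (· - x) (𝓝[>] x) (𝓝[>] 0) :=
    tendsto_nhdsWithin_iff.2
      ⟨by simpa using ((tendsto_id.sub_const x).mono_left nhdsWithin_le_nhds :
          Tendsto (· - x) (𝓝[>] x) (𝓝 (x - x))),
        eventually_nhdsWithin_of_forall fun z (hz : x < z) => (sub_pos.2 hz : 0 < z - x)⟩
  filter_upwards [hshift.eventually (eventually_lt_of_limsup_lt h)] with z hz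
  rw [slope_def_field]
  simpa using hz

noncomputable def linearOdeSolution (c k t₀ y₀ t : ℝ) : ℝ :=
  (t + c) * (y₀ / (t₀ + c) + k * (Real.log (t + c) - Real.log (t₀ + c)))

theorem linearOdeSolution_self {c t₀ : ℝ} (h : t₀ + c ≠ 0) (k y₀ : ℝ) :
    linearOdeSolution c k t₀ y₀ t₀ = y₀ := by
  simp [linearOdeSolution, mul_div_cancel₀ _ h]

theorem hasDerivAt_linearOdeSolution {c t : ℝ} (ht : 0 < t + c) (k t₀ y₀ : ℝ) :
    HasDerivAt (linearOdeSolution c k t₀ y₀)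
      (linearOdeSolution c k t₀ y₀ t / (t + c) + k) t := by
  have hshift : HasDerivAt (· + c) 1 t := (hasDerivAt_id t).add_const c
  refine (hshift.mul (((hshift.log ht.ne').sub_const _).const_mul k |>.const_add
    (y₀ / (t₀ + c)))).congr_deriv ?_
  unfold linearOdeSolution
  field_simp

theorem le_linearOdeSolution_of_upperDiniDeriv_le {A : ℝ → ℝ} {c k t₀ t₁ : ℝ}
    (hc : 0 < t₀ + c) (hcont : ContinuousOn A (Icc t₀ t₁))
    (hdini : ∀ t ∈ Ico t₀ t₁, upperDiniDeriv A t ≤ ((A t / (t + c) + k : ℝ) : EReal)) :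
    ∀ t ∈ Icc t₀ t₁, A t ≤ linearOdeSolution c k t₀ (A t₀) t := by
  set y := linearOdeSolution c k t₀ (A t₀)
  have hpos : ∀ t ∈ Icc t₀ t₁, 0 < t + c := fun t ht => by linarith [ht.1]
  have hy : ∀ t ∈ Icc t₀ t₁, HasDerivAt y (y t / (t + c) + k) t := fun t ht =>
    hasDerivAt_linearOdeSolution (hpos t ht) k t₀ (A t₀)
  have hbarrier : ∀ ε > 0, ∀ t ∈ Icc t₀ t₁, A t ≤ y t + ε * (t - t₀) := by
    intro ε hε
    have hB : ∀ t ∈ Icc t₀ t₁,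
        HasDerivAt (fun s => y s + ε * (s - t₀)) (y t / (t + c) + k + ε) t := fun t ht =>
      ((hy t ht).add (((hasDerivAt_id t).sub_const t₀).const_mul ε)).congr_deriv (by ring)
    refine image_le_of_liminf_slope_right_lt_deriv_boundary' hcont
      (fun t ht r hr => (eventually_slope_lt_of_upperDiniDeriv_lt
        ((hdini t ht).trans_lt (EReal.coe_lt_coe hr))).frequently)
      (by simp [y, linearOdeSolution_self hc.ne'])
      (fun t ht => (hB t ht).continuousAt.continuousWithinAt)
      (fun t ht => (hB t (Ico_subset_Icc_self ht)).hasDerivWithinAt) ?_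
    rintro t ht (hcontact : A t = y t + ε * (t - t₀))
    have ht' := hpos t (Ico_subset_Icc_self ht)
    -- at a contact point the barrier outruns the bound by `ε (t₀ + c) / (t + c) > 0`
    rw [hcontact, add_div, mul_div_assoc]
    have hslack : ε * ((t - t₀) / (t + c)) < ε := mul_lt_of_lt_one_right hε
      ((div_lt_one ht').2 (by linarith))
    linarith
  intro t ht
  refine ge_of_tendsto (x := 𝓝[>] (0 : ℝ)) ?_
    (eventually_nhdsWithin_of_forall fun ε hε => hbarrier ε hε t ht)
  exact ((continuous_const.add (continuous_id.mul continuous_const)).tendsto' 0 _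
    (by simp [y])).mono_left nhdsWithin_le_nhds

/-- If `A ≥ 0` is continuous on `[t₀,t₁]` and satisfies
`D⁺A(t) ≤ −2π + (3/(4(t+c)))·A(t)` on `[t₀,t₁)`, then
`A(t₁)/(t₁+c) ≤ A(t₀)/(t₀+c) − 2π (log(t₁+c) − log(t₀+c))`. -/
theorem rescaled_area_decay
    (t₀ t₁ c : ℝ) (ht₀ : 0 ≤ t₀) (ht : t₀ < t₁) (hc : 0 < c)
    (A : ℝ → ℝ)
    (hcont : ContinuousOn A (Set.Icc t₀ t₁))
    (hnonneg : ∀ t ∈ Set.Icc t₀ t₁, 0 ≤ A t)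
    (hdini : ∀ t ∈ Set.Ico t₀ t₁,
      upperDiniDeriv A t ≤ ((-2 * Real.pi + 3 / (4 * (t + c)) * A t : ℝ) : EReal)) :
    A t₁ / (t₁ + c) ≤ A t₀ / (t₀ + c) - 2 * Real.pi * (Real.log (t₁ + c) - Real.log (t₀ + c)) := by
  have hpos : ∀ t ∈ Icc t₀ t₁, 0 < t + c := fun t ht => by linarith [ht.1]
  have hlinear : ∀ t ∈ Ico t₀ t₁,
      upperDiniDeriv A t ≤ ((A t / (t + c) + -2 * Real.pi : ℝ) : EReal) := by
    intro t ht
    have hAt := hnonneg t (Ico_subset_Icc_self ht)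
    have htc := hpos t (Ico_subset_Icc_self ht)
    have hcoeff : 3 / (4 * (t + c)) * A t ≤ A t / (t + c) := by
      rw [div_mul_eq_mul_div, div_le_div_iff₀ (by positivity) htc]
      nlinarith
    exact (hdini t ht).trans (EReal.coe_le_coe_iff.2 (by linarith))
  have hsol := le_linearOdeSolution_of_upperDiniDeriv_le (hpos t₀ (left_mem_Icc.2 ht.le)) hcont
    hlinear t₁ (right_mem_Icc.2 ht.le)
  rw [div_le_iff₀ (hpos t₁ (right_mem_Icc.2 ht.le))]
  unfold linearOdeSolution at hsol
  linarith
end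

section
/- Let t₀ < t₁, λ > 0, K ≥ 0, m ≥ 0. Let v : [t₀,t₁] × ℝ → ℝ be continuous, periodic in the second variable with period λ, with ∂v/∂t, ∂v/∂x and ∂²v/∂x² existing and continuous, and suppose that pointwise ∂v/∂t ≤ ∂²v/∂x² + b·∂v/∂x + a·v + c, where a, b, c are continuous functions with a(t,x) ≤ K and c(t,x) ≤ K everywhere. If v(t₀,x) ≤ m for all x, then v(t,x) ≤ (m+1)·e^{K(t−t₀)} − 1 for all t ∈ [t₀,t₁] and all x. -/
/-!
For `ε > 0` compare `v` with the strict barrier `ψ(t) = (m + ε + 1) e^{(K + ε)(t - t₀)} - 1`.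
If `v` ever reached `ψ`, then at the first touching time `ts` the function `v ts` would attain its
maximum `ψ ts ≥ 0` at some `xs` (by compactness of a period), so `vx = 0`, `vxx ≤ 0` there, while
`vt ≥ ψ' = (K + ε)(ψ + 1)`. The inequality would give `vt ≤ a ψ + c ≤ K (ψ + 1)`, which is
impossible. Letting `ε → 0` gives the bound.
-/
open Set Filter Topology

theorem Function.Periodic.le_of_forall_mem_Icc_le {α : Type*} [LE α] {f : ℝ → α} {c : ℝ} {M : α}
    (hf : Function.Periodic f c) (hc : 0 < c) (h : ∀ x ∈ Icc 0 c, f x ≤ M) (x : ℝ) : f x ≤ M := by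
  obtain ⟨y, hy, hxy⟩ := hf.exists_mem_Ico₀ hc x
  exact hxy ▸ h y (Ico_subset_Icc_self hy)

theorem IsLocalMax.hasDerivAt_deriv_nonpos {f f' : ℝ → ℝ} {x f'' : ℝ} (hmax : IsLocalMax f x)
    (hf : ∀ᶠ y in 𝓝 x, HasDerivAt f (f' y) y) (hf' : HasDerivAt f' f'' x) : f'' ≤ 0 := by
  by_contra! hpos
  have hderiv : deriv f =ᶠ[𝓝 x] f' := hf.mono fun y hy => hy.deriv
  have hmin : IsLocalMin f x := by
    refine isLocalMin_of_deriv_deriv_pos ?_ ?_ hf.self_of_nhds.continuousAt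
    · rwa [hderiv.deriv_eq, hf'.deriv]
    · rw [hderiv.eq_of_nhds]
      exact hmax.hasDerivAt_eq_zero hf.self_of_nhds
  have hconst : f =ᶠ[𝓝 x] fun _ => f x :=
    (hmax.and hmin).mono fun y hy => le_antisymm hy.1 hy.2
  have hzero : f' =ᶠ[𝓝 x] fun _ => 0 := by
    filter_upwards [hconst.eventuallyEq_nhds, hf] with y hy hdy
    exact hdy.unique ((hasDerivAt_const y (f x)).congr_of_eventuallyEq hy)
  exact hpos.ne' ((hf'.congr_of_eventuallyEq hzero.symm).unique (hasDerivAt_const x 0))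

theorem IsMaxOn.hasDerivWithinAt_Icc_right_nonneg {g : ℝ → ℝ} {g' a b : ℝ} (hab : a < b)
    (hmax : IsMaxOn g (Icc a b) b) (hg : HasDerivWithinAt g g' (Icc a b) b) : 0 ≤ g' := by
  have hcone : a - b ∈ posTangentConeAt (Icc a b) b :=
    sub_mem_posTangentConeAt_of_segment_subset (by rw [segment_symm, segment_eq_Icc hab.le])
  have h := hmax.localize.hasFDerivWithinAt_nonpos hg.hasFDerivWithinAt hcone
  simp only [ContinuousLinearMap.toSpanSingleton_apply, smul_eq_mul] at h
  exact nonneg_of_mul_nonpos_right h (sub_neg.2 hab)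

theorem exists_first_zero {X : Type*} [TopologicalSpace X] [T2Space X] {w : ℝ → X → ℝ}
    {S : Set X} {t₀ t₁ : ℝ} (hS : IsCompact S)
    (hw : ContinuousOn (fun p : ℝ × X => w p.1 p.2) (Icc t₀ t₁ ×ˢ S))
    (h₀ : ∀ x ∈ S, w t₀ x < 0) (hbad : ∃ t ∈ Icc t₀ t₁, ∃ x ∈ S, 0 ≤ w t x) :
    ∃ ts ∈ Ioc t₀ t₁, ∃ xs ∈ S, w ts xs = 0 ∧ ∀ t ∈ Icc t₀ ts, ∀ x ∈ S, w t x ≤ 0 := by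
  set A := Prod.fst '' (Icc t₀ t₁ ×ˢ S ∩ (fun p : ℝ × X => w p.1 p.2) ⁻¹' Ici 0)
  have hA : IsCompact A :=
    ((isCompact_Icc.prod hS).of_isClosed_subset
      (hw.preimage_isClosed_of_isClosed (isCompact_Icc.prod hS).isClosed isClosed_Ici)
      inter_subset_left).image continuous_fst
  have hAne : A.Nonempty := by
    obtain ⟨t, ht, x, hx, hwx⟩ := hbad
    exact ⟨t, (t, x), ⟨⟨ht, hx⟩, hwx⟩, rfl⟩
  obtain ⟨⟨ts, xs⟩, ⟨⟨hts, hxs⟩, hwts⟩, hfst⟩ := hA.sInf_mem hAne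
  have hinf : sInf A = ts := hfst.symm
  have hbefore : ∀ t ∈ Icc t₀ t₁, t < ts → ∀ x ∈ S, w t x < 0 := fun t ht hlt x hx =>
    not_le.1 fun hwx => hlt.not_ge (hinf ▸ csInf_le hA.bddBelow ⟨(t, x), ⟨⟨ht, hx⟩, hwx⟩, rfl⟩)
  have hlt : t₀ < ts := hts.1.lt_of_ne fun h => (h₀ xs hxs).not_ge (h ▸ hwts)
  have hle : ∀ t ∈ Icc t₀ ts, ∀ x ∈ S, w t x ≤ 0 := by
    intro t ht x hx
    have hcont : ContinuousOn (fun t => w t x) (Icc t₀ ts) :=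
      hw.comp (continuousOn_id.prodMk continuousOn_const)
        fun t ht => ⟨⟨ht.1, ht.2.trans hts.2⟩, hx⟩
    have hcl : t ∈ closure (Ico t₀ ts) := (closure_Ico hlt.ne).symm ▸ ht
    refine ContinuousWithinAt.closure_le hcl ((hcont t ht).mono Ico_subset_Icc_self)
      continuousWithinAt_const fun s hs => (hbefore s ⟨hs.1, hs.2.le.trans hts.2⟩ hs.2 x hx).le
  exact ⟨ts, ⟨hlt, hts.2⟩, xs, hxs, le_antisymm (hle ts ⟨hlt.le, le_rfl⟩ xs hxs) hwts, hle⟩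

noncomputable def expBarrier (m K t₀ t : ℝ) : ℝ := (m + 1) * Real.exp (K * (t - t₀)) - 1

theorem hasDerivAt_expBarrier (m K t₀ t : ℝ) :
    HasDerivAt (expBarrier m K t₀) (K * (expBarrier m K t₀ t + 1)) t := by
  have h := ((((hasDerivAt_id t).sub_const t₀).const_mul K).exp.const_mul (m + 1)).sub_const 1
  refine h.congr_deriv ?_
  simp only [expBarrier, id]
  ring

theorem continuous_expBarrier (m K t₀ : ℝ) : Continuous (expBarrier m K t₀) :=
  continuous_iff_continuousAt.2 fun t => (hasDerivAt_expBarrier m K t₀ t).continuousAt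

theorem le_expBarrier {m K t₀ t : ℝ} (hm : -1 ≤ m) (hK : 0 ≤ K) (ht : t₀ ≤ t) :
    m ≤ expBarrier m K t₀ t := by
  have : 1 ≤ Real.exp (K * (t - t₀)) := Real.one_le_exp (mul_nonneg hK (sub_nonneg.2 ht))
  unfold expBarrier
  nlinarith

theorem le_expBarrier_of_lt {t₀ t₁ lam K L M : ℝ} {v vt vx vxx a b c : ℝ → ℝ → ℝ}
    (hlam : 0 < lam) (hK : 0 ≤ K) (hKL : K < L) (hM : 0 ≤ M)
    (hv_cont : ContinuousOn (fun p : ℝ × ℝ => v p.1 p.2) (Icc t₀ t₁ ×ˢ univ))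
    (hper : ∀ t ∈ Icc t₀ t₁, Function.Periodic (v t) lam)
    (hvt : ∀ t ∈ Icc t₀ t₁, ∀ x : ℝ,
      HasDerivWithinAt (fun s => v s x) (vt t x) (Icc t₀ t₁) t)
    (hvx : ∀ t ∈ Icc t₀ t₁, ∀ x : ℝ, HasDerivAt (v t) (vx t x) x)
    (hvxx : ∀ t ∈ Icc t₀ t₁, ∀ x : ℝ, HasDerivAt (vx t) (vxx t x) x)
    (ha_ub : ∀ t ∈ Icc t₀ t₁, ∀ x : ℝ, a t x ≤ K)
    (hc_ub : ∀ t ∈ Icc t₀ t₁, ∀ x : ℝ, c t x ≤ K)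
    (hpde : ∀ t ∈ Icc t₀ t₁, ∀ x : ℝ,
      vt t x ≤ vxx t x + b t x * vx t x + a t x * v t x + c t x)
    (hinit : ∀ x : ℝ, v t₀ x < M) :
    ∀ t ∈ Icc t₀ t₁, ∀ x : ℝ, v t x ≤ expBarrier M L t₀ t := by
  set ψ := expBarrier M L t₀
  by_contra! hbad
  have hbad' : ∃ t ∈ Icc t₀ t₁, ∃ x ∈ Icc 0 lam, 0 ≤ v t x - ψ t := by
    obtain ⟨t, ht, x, hx⟩ := hbad
    by_contra! hneg
    exact hx.not_ge <| (hper t ht).le_of_forall_mem_Icc_le hlam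
      (fun y hy => by linarith [hneg t ht y hy]) x
  have hw : ContinuousOn (fun p : ℝ × ℝ => v p.1 p.2 - ψ p.1) (Icc t₀ t₁ ×ˢ Icc 0 lam) :=
    (hv_cont.mono (prod_mono_right (subset_univ _))).sub
      ((continuous_expBarrier M L t₀).comp_continuousOn continuousOn_fst)
  have h₀ : ∀ x ∈ Icc 0 lam, v t₀ x - ψ t₀ < 0 := fun x _ => by
    have : ψ t₀ = M := by simp [ψ, expBarrier]
    linarith [hinit x]
  obtain ⟨ts, hts, xs, hxs, htouch, hbelow⟩ := exists_first_zero isCompact_Icc hw h₀ hbad'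
  have htsI : ts ∈ Icc t₀ t₁ := Ioc_subset_Icc_self hts
  have hmax : IsLocalMax (v ts) xs := Eventually.of_forall <|
    (hper ts htsI).le_of_forall_mem_Icc_le hlam fun y hy => by
      linarith [hbelow ts ⟨hts.1.le, le_rfl⟩ y hy]
  have hvx0 : vx ts xs = 0 := hmax.hasDerivAt_eq_zero (hvx ts htsI xs)
  have hvxx0 : vxx ts xs ≤ 0 :=
    hmax.hasDerivAt_deriv_nonpos (Eventually.of_forall fun y => hvx ts htsI y) (hvxx ts htsI xs)
  have hvt0 : L * (ψ ts + 1) ≤ vt ts xs := by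
    have hderiv : HasDerivWithinAt (fun t => v t xs - ψ t) (vt ts xs - L * (ψ ts + 1))
        (Icc t₀ ts) ts :=
      ((hvt ts htsI xs).mono (Icc_subset_Icc_right hts.2)).sub
        (hasDerivAt_expBarrier M L t₀ ts).hasDerivWithinAt
    have htmax : IsMaxOn (fun t => v t xs - ψ t) (Icc t₀ ts) ts := fun t ht => by
      simpa [htouch] using hbelow t ht xs hxs
    linarith [htmax.hasDerivWithinAt_Icc_right_nonneg hts.1 hderiv]
  have hψ : 0 ≤ ψ ts := hM.trans (le_expBarrier (by linarith) (hK.trans hKL.le) hts.1.le)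
  have hv : v ts xs = ψ ts := by linarith
  have hpde' := hpde ts htsI xs
  rw [hvx0, mul_zero, add_zero, hv] at hpde'
  have hav : a ts xs * ψ ts ≤ K * ψ ts := mul_le_mul_of_nonneg_right (ha_ub ts htsI xs) hψ
  have hgap : K * (ψ ts + 1) < L * (ψ ts + 1) := mul_lt_mul_of_pos_right hKL (by linarith)
  linarith [hc_ub ts htsI xs]

theorem parabolic_maximum_principle_circle_general
    (t₀ t₁ lam K m : ℝ) (hlam : 0 < lam) (hK : 0 ≤ K) (hm : 0 ≤ m)
    (v vt vx vxx a b c : ℝ → ℝ → ℝ)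
    (hv_cont : ContinuousOn (fun p : ℝ × ℝ => v p.1 p.2) (Set.Icc t₀ t₁ ×ˢ Set.univ))
    (hper : ∀ t ∈ Set.Icc t₀ t₁, ∀ x : ℝ, v t (x + lam) = v t x)
    (hvt : ∀ t ∈ Set.Icc t₀ t₁, ∀ x : ℝ,
      HasDerivWithinAt (fun s => v s x) (vt t x) (Set.Icc t₀ t₁) t)
    (hvx : ∀ t ∈ Set.Icc t₀ t₁, ∀ x : ℝ, HasDerivAt (fun y => v t y) (vx t x) x)
    (hvxx : ∀ t ∈ Set.Icc t₀ t₁, ∀ x : ℝ, HasDerivAt (fun y => vx t y) (vxx t x) x)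
    (ha_ub : ∀ t ∈ Set.Icc t₀ t₁, ∀ x : ℝ, a t x ≤ K)
    (hc_ub : ∀ t ∈ Set.Icc t₀ t₁, ∀ x : ℝ, c t x ≤ K)
    (hpde : ∀ t ∈ Set.Icc t₀ t₁, ∀ x : ℝ,
      vt t x ≤ vxx t x + b t x * vx t x + a t x * v t x + c t x)
    (hinit : ∀ x : ℝ, v t₀ x ≤ m) :
    ∀ t ∈ Set.Icc t₀ t₁, ∀ x : ℝ, v t x ≤ (m + 1) * Real.exp (K * (t - t₀)) - 1 := by
  intro t ht x
  have hlim : Tendsto (fun ε => expBarrier (m + ε) (K + ε) t₀ t) (𝓝[>] 0)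
      (𝓝 (expBarrier m K t₀ t)) := by
    have : Continuous fun ε => expBarrier (m + ε) (K + ε) t₀ t := by
      unfold expBarrier; fun_prop
    simpa using (this.tendsto 0).mono_left nhdsWithin_le_nhds
  refine ge_of_tendsto hlim (eventually_nhdsWithin_of_forall fun ε (hε : 0 < ε) => ?_)
  exact le_expBarrier_of_lt hlam hK (lt_add_of_pos_right K hε) (by positivity) hv_cont
    hper hvt hvx hvxx ha_ub hc_ub hpde (fun x => (hinit x).trans_lt (lt_add_of_pos_right m hε))
    t ht x

/-- Parabolic maximum principle on the circle (boundedness of the curvature of ramp solutions):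
if `∂v/∂t ≤ ∂²v/∂x² + b·∂v/∂x + a·v + c` with `a ≤ K`, `c ≤ K`, `v` is `λ`-periodic in `x`, and
`v(t₀,·) ≤ m`, then `v(t,x) ≤ (m+1)·e^{K(t−t₀)} − 1` on `[t₀,t₁]`. -/
theorem parabolic_maximum_principle_circle
    (t₀ t₁ lam K m : ℝ) (ht : t₀ < t₁) (hlam : 0 < lam) (hK : 0 ≤ K) (hm : 0 ≤ m)
    (v vt vx vxx a b c : ℝ → ℝ → ℝ)
    (hv_cont : ContinuousOn (fun p : ℝ × ℝ => v p.1 p.2) (Set.Icc t₀ t₁ ×ˢ Set.univ))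
    (hper : ∀ t ∈ Set.Icc t₀ t₁, ∀ x : ℝ, v t (x + lam) = v t x)
    (hvt : ∀ t ∈ Set.Icc t₀ t₁, ∀ x : ℝ,
      HasDerivWithinAt (fun s => v s x) (vt t x) (Set.Icc t₀ t₁) t)
    (hvx : ∀ t ∈ Set.Icc t₀ t₁, ∀ x : ℝ, HasDerivAt (fun y => v t y) (vx t x) x)
    (hvxx : ∀ t ∈ Set.Icc t₀ t₁, ∀ x : ℝ, HasDerivAt (fun y => vx t y) (vxx t x) x)
    (hvt_cont : ContinuousOn (fun p : ℝ × ℝ => vt p.1 p.2) (Set.Icc t₀ t₁ ×ˢ Set.univ))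
    (hvx_cont : ContinuousOn (fun p : ℝ × ℝ => vx p.1 p.2) (Set.Icc t₀ t₁ ×ˢ Set.univ))
    (hvxx_cont : ContinuousOn (fun p : ℝ × ℝ => vxx p.1 p.2) (Set.Icc t₀ t₁ ×ˢ Set.univ))
    (ha_cont : ContinuousOn (fun p : ℝ × ℝ => a p.1 p.2) (Set.Icc t₀ t₁ ×ˢ Set.univ))
    (hb_cont : ContinuousOn (fun p : ℝ × ℝ => b p.1 p.2) (Set.Icc t₀ t₁ ×ˢ Set.univ))
    (hc_cont : ContinuousOn (fun p : ℝ × ℝ => c p.1 p.2) (Set.Icc t₀ t₁ ×ˢ Set.univ))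
    (ha_ub : ∀ t ∈ Set.Icc t₀ t₁, ∀ x : ℝ, a t x ≤ K)
    (hc_ub : ∀ t ∈ Set.Icc t₀ t₁, ∀ x : ℝ, c t x ≤ K)
    (hpde : ∀ t ∈ Set.Icc t₀ t₁, ∀ x : ℝ,
      vt t x ≤ vxx t x + b t x * vx t x + a t x * v t x + c t x)
    (hinit : ∀ x : ℝ, v t₀ x ≤ m) :
    ∀ t ∈ Set.Icc t₀ t₁, ∀ x : ℝ, v t x ≤ (m + 1) * Real.exp (K * (t - t₀)) - 1 :=
  parabolic_maximum_principle_circle_general t₀ t₁ lam K m hlam hK hm v vt vx vxx a b c hv_cont hper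
    hvt hvx hvxx ha_ub hc_ub hpde hinit
end
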